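/- Let A be a finite-dimensional unital k-algebra, μ: A → A a k-algebra automorphism, x, y nonzero scalars, and suppose for every a ∈ A the trace of b ↦ a·μ(b) vanishes. Then Sp₂(R_{x,y}⁻¹∘(Id⊗μ)) = y⁻¹·Id_A, where R_{x,y}⁻¹(a⊗b) = y⁻¹·(ab⊗1) + x⁻¹·(1⊗ab) − x⁻¹·(a⊗b). -/

import Mathlib

open TensorProduct LinearMap

/-- The operator `R_{x,y,z} : A ⊗ A → A ⊗ A`, `a ⊗ b ↦ x•(ab ⊗ 1) + y•(1 ⊗ ab) - z•(a ⊗ b)`. -/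
noncomputable def yangBaxterOp (k : Type*) [Field k] (A : Type*) [Ring A] [Algebra k A]
    (x y z : k) : A ⊗[k] A →ₗ[k] A ⊗[k] A :=
  x • ((TensorProduct.mk k A A).flip 1 ∘ₗ LinearMap.mul' k A) +
    y • (TensorProduct.mk k A A 1 ∘ₗ LinearMap.mul' k A) -
      z • LinearMap.id


/-- The partial trace over the last tensor factor: for finite-dimensional `V` and
`f : W ⊗ V → W ⊗ V`, `ptrace f : W → W` has matrix coefficients
`(ptrace f)ʲᵢ = Σ_l f^{jl}_{il}`. -/
noncomputable def ptrace (k : Type*) [Field k] (W V : Type*)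
    [AddCommGroup W] [Module k W] [AddCommGroup V] [Module k V] [FiniteDimensional k V]
    (f : W ⊗[k] V →ₗ[k] W ⊗[k] V) : W →ₗ[k] W :=
  ∑ i : Fin (Module.finrank k V),
    (TensorProduct.rid k W).toLinearMap ∘ₗ
      LinearMap.lTensor W ((Module.finBasis k V).coord i) ∘ₗ f ∘ₗ
        (TensorProduct.mk k W V).flip (Module.finBasis k V i)

lemma trace_eq_sum_coord' (k : Type*) [Field k] (A : Type*) [AddCommGroup A] [Module k A]
    [FiniteDimensional k A] (f : A →ₗ[k] A) :
    LinearMap.trace k A f =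
      ∑ i : Fin (Module.finrank k A),
        (Module.finBasis k A).coord i (f (Module.finBasis k A i)) := by
  rw [LinearMap.trace_eq_matrix_trace k (Module.finBasis k A) f, Matrix.trace]
  simp [LinearMap.toMatrix_apply, Matrix.diag, Module.Basis.coord_apply]

/-- under the same hypotheses as Statement 9,
`Sp₂(R_{x,y}⁻¹ ∘ (Id ⊗ μ)) = y⁻¹ • Id_A`, where
`R_{x,y}⁻¹(a ⊗ b) = y⁻¹•(ab ⊗ 1) + x⁻¹•(1 ⊗ ab) - x⁻¹•(a ⊗ b)`. -/
theorem ptrace_yangBaxterOp_inv_enhancement (k : Type*) [Field k]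
    (A : Type*) [Ring A] [Algebra k A] [FiniteDimensional k A]
    (x y : k) (hx : x ≠ 0) (hy : y ≠ 0) (μ : A ≃ₐ[k] A)
    (htr : ∀ a : A, LinearMap.trace k A (LinearMap.mulLeft k a ∘ₗ μ.toLinearMap) = 0) :
    ptrace k A A (yangBaxterOp k A y⁻¹ x⁻¹ x⁻¹ ∘ₗ LinearMap.lTensor A μ.toLinearMap) =
      y⁻¹ • LinearMap.id := by
  ext a
  have key : ∀ i : Fin (Module.finrank k A),
      (TensorProduct.rid k A) ((LinearMap.lTensor A ((Module.finBasis k A).coord i))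
        ((yangBaxterOp k A y⁻¹ x⁻¹ x⁻¹)
          (a ⊗ₜ[k] μ ((Module.finBasis k A) i)))) =
      y⁻¹ • ((Module.finBasis k A).coord i 1 • (a * μ ((Module.finBasis k A) i))) +
        x⁻¹ • ((Module.finBasis k A).coord i (a * μ ((Module.finBasis k A) i)) • (1:A)) -
          x⁻¹ • ((Module.finBasis k A).coord i (μ ((Module.finBasis k A) i)) • a) := by
    intro i
    simp [yangBaxterOp, LinearMap.mul'_apply, TensorProduct.rid_tmul]
  simp only [ptrace, LinearMap.sum_apply, LinearMap.coe_comp, Function.comp_apply,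
    TensorProduct.mk_apply, LinearMap.flip_apply, LinearEquiv.coe_coe,
    LinearMap.lTensor_tmul, AlgEquiv.toLinearMap_apply, key]
  rw [Finset.sum_sub_distrib, Finset.sum_add_distrib, ← Finset.smul_sum, ← Finset.smul_sum,
    ← Finset.smul_sum, ← Finset.sum_smul, ← Finset.sum_smul]
  have h1 : ∑ i : Fin (Module.finrank k A),
      (Module.finBasis k A).coord i 1 • (a * μ ((Module.finBasis k A) i)) = a := by
    have : ∀ i : Fin (Module.finrank k A),
        (Module.finBasis k A).coord i 1 • (a * μ ((Module.finBasis k A) i)) =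
        a * μ ((Module.finBasis k A).coord i 1 • (Module.finBasis k A) i) := by
      intro i; rw [map_smul, mul_smul_comm]
    rw [Finset.sum_congr rfl fun i _ => this i, ← Finset.mul_sum, ← map_sum]
    have := (Module.finBasis k A).sum_repr 1
    simp only [Module.Basis.coord_apply] at this ⊢
    rw [this, map_one, mul_one]
  have h2 : ∑ i : Fin (Module.finrank k A),
      (Module.finBasis k A).coord i (a * μ ((Module.finBasis k A) i)) = 0 := by
    have := htr a
    rw [trace_eq_sum_coord'] at this
    simpa [LinearMap.mulLeft_apply] using this
  have h3 : ∑ i : Fin (Module.finrank k A),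
      (Module.finBasis k A).coord i (μ ((Module.finBasis k A) i)) = 0 := by
    have := htr 1
    rw [trace_eq_sum_coord'] at this
    simpa [LinearMap.mulLeft_apply] using this
  rw [h1, h2, h3]
  simp
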